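/- Let a, b, c, d > 0, s ∈ ℝ, and let (u, v) be a pair of twice continuously differentiable functions with u(ξ) > 0 and v(ξ) > 0 for all ξ ∈ ℝ, solving u'' − s·u' + u·(1 − u − c·v) = 0 and d·v'' − s·v' + v·(a − b·u − v) = 0 on ℝ. If u is oscillatory near +∞ (i.e. there is no K ∈ ℝ such that u is monotone on [K, ∞)), then v is oscillatory near +∞; symmetrically, if v is oscillatory near +∞ then so is u. -/

import Mathlib

open Filter Real Set

/-- A function is oscillatory near `+∞` if it is not eventually monotone, i.e.
there is no `K` such that it is monotone (nondecreasing or nonincreasing) on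
`[K, ∞)`. -/
def OscillatoryAtTop (w : ℝ → ℝ) : Prop :=
  ¬ ∃ K : ℝ, MonotoneOn w (Set.Ici K) ∨ AntitoneOn w (Set.Ici K)

/-!
At a critical point of `u` the equation reads `u'' = -u (1 - u - c v)`, so at a local maximum
(`u'' ≤ 0`) we get `u ≤ 1 - c v` and at a local minimum `1 - c v ≤ u`. An oscillating continuous
function has, arbitrarily far out, a local maximum followed by a strictly lower local minimum and
a local minimum followed by a strictly higher local maximum; squeezed between these values,
`1 - c v` can be neither eventually nondecreasing nor eventually nonincreasing. The same argument
with `a - b u` in place of `1 - c v` gives the converse.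
-/

open Topology

theorem IsLocalMin.deriv_deriv_nonneg {f : ℝ → ℝ} {x₀ : ℝ} (h : IsLocalMin f x₀)
    (hc : ContinuousAt f x₀) : 0 ≤ deriv (deriv f) x₀ := by
  by_contra! hneg
  -- `f'' x₀ < 0` would make `x₀` also a local maximum, so `f` would be locally constant.
  have hconst : f =ᶠ[𝓝 x₀] fun _ => f x₀ := by
    filter_upwards [h, isLocalMax_of_deriv_deriv_neg hneg h.deriv_eq_zero hc] with x hmin hmax
    exact le_antisymm hmax hmin
  have hzero : deriv (deriv f) x₀ = 0 := by
    rw [hconst.deriv.deriv_eq]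
    simp
  exact hneg.ne hzero

theorem IsLocalMax.deriv_deriv_nonpos {f : ℝ → ℝ} {x₀ : ℝ} (h : IsLocalMax f x₀)
    (hc : ContinuousAt f x₀) : deriv (deriv f) x₀ ≤ 0 := by
  by_contra! hpos
  have hconst : f =ᶠ[𝓝 x₀] fun _ => f x₀ := by
    filter_upwards [h, isLocalMin_of_deriv_deriv_pos hpos h.deriv_eq_zero hc] with x hmax hmin
    exact le_antisymm hmax hmin
  have hzero : deriv (deriv f) x₀ = 0 := by
    rw [hconst.deriv.deriv_eq]
    simp
  exact hpos.ne' hzero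

theorem exists_isLocalMax_Ioo_of_lt {f : ℝ → ℝ} {a b x y : ℝ} (hf : ContinuousOn f (Icc a b))
    (hx : x ∈ Icc a b) (hy : y ∈ Icc a b) (hax : f a < f x) (hby : f b < f y) :
    ∃ c ∈ Ioo a b, IsLocalMax f c ∧ f a < f c ∧ f b < f c := by
  obtain ⟨c, hc, hmax⟩ := isCompact_Icc.exists_isMaxOn ⟨x, hx⟩ hf
  have hac : f a < f c := hax.trans_le (hmax hx)
  have hbc : f b < f c := hby.trans_le (hmax hy)
  have hcIoo : c ∈ Ioo a b :=
    ⟨hc.1.lt_of_ne (by rintro rfl; exact hac.false), hc.2.lt_of_ne (by rintro rfl; exact hbc.false)⟩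
  exact ⟨c, hcIoo, hmax.isLocalMax (Icc_mem_nhds hcIoo.1 hcIoo.2), hac, hbc⟩

theorem exists_isLocalMin_Ioo_of_lt {f : ℝ → ℝ} {a b x y : ℝ} (hf : ContinuousOn f (Icc a b))
    (hx : x ∈ Icc a b) (hy : y ∈ Icc a b) (hxa : f x < f a) (hyb : f y < f b) :
    ∃ c ∈ Ioo a b, IsLocalMin f c ∧ f c < f a ∧ f c < f b := by
  obtain ⟨c, hc, hmax, hac, hbc⟩ :=
    exists_isLocalMax_Ioo_of_lt hf.neg hx hy (neg_lt_neg hxa) (neg_lt_neg hyb)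
  exact ⟨c, hc, by simpa using hmax.neg, neg_lt_neg_iff.mp hac, neg_lt_neg_iff.mp hbc⟩

namespace OscillatoryAtTop

variable {w : ℝ → ℝ}

theorem of_comp {g : ℝ → ℝ} (hg : Monotone g ∨ Antitone g) (h : OscillatoryAtTop (g ∘ w)) :
    OscillatoryAtTop w := by
  rintro ⟨K, hK⟩
  refine h ⟨K, ?_⟩
  rcases hg with hg | hg <;> rcases hK with hK | hK
  · exact Or.inl (hg.comp_monotoneOn hK)
  · exact Or.inr (hg.comp_antitoneOn hK)
  · exact Or.inr (hg.comp_monotoneOn hK)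
  · exact Or.inl (hg.comp_antitoneOn hK)

theorem neg (h : OscillatoryAtTop w) : OscillatoryAtTop (-w) :=
  of_comp (g := Neg.neg) (Or.inr fun _ _ => neg_le_neg) (by simpa [Function.comp_def] using h)

theorem exists_rise_after (h : OscillatoryAtTop w) (K : ℝ) :
    ∃ x y, K ≤ x ∧ x < y ∧ w x < w y := by
  have hK : ¬ AntitoneOn w (Ici K) := fun hK => h ⟨K, Or.inr hK⟩
  simp only [antitoneOn_iff_forall_lt, mem_Ici, not_forall, not_le] at hK
  obtain ⟨x, hx, y, -, hxy, hlt⟩ := hK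
  exact ⟨x, y, hx, hxy, hlt⟩

theorem exists_fall_after (h : OscillatoryAtTop w) (K : ℝ) :
    ∃ x y, K ≤ x ∧ x < y ∧ w y < w x := by
  obtain ⟨x, y, hx, hxy, hlt⟩ := h.neg.exists_rise_after K
  exact ⟨x, y, hx, hxy, neg_lt_neg_iff.mp hlt⟩

theorem exists_isLocalMax_isLocalMin_after (hw : Continuous w) (h : OscillatoryAtTop w) (K : ℝ) :
    ∃ p q, K ≤ p ∧ p < q ∧ IsLocalMax w p ∧ IsLocalMin w q ∧ w q < w p := by
  obtain ⟨x₁, x₂, hKx₁, hx₁₂, hrise⟩ := h.exists_rise_after K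
  obtain ⟨y₁, y₂, hxy, hy₁₂, hfall⟩ := h.exists_fall_after x₂
  obtain ⟨p, hp, hpmax, -, hy₂p⟩ := exists_isLocalMax_Ioo_of_lt hw.continuousOn
    ⟨hx₁₂.le, hxy.trans hy₁₂.le⟩ ⟨(hx₁₂.trans_le hxy).le, hy₁₂.le⟩ hrise hfall
  obtain ⟨z₁, z₂, hyz, hz₁₂, hrise'⟩ := h.exists_rise_after y₂
  obtain ⟨q, hq, hqmin, hqp, -⟩ := exists_isLocalMin_Ioo_of_lt hw.continuousOn
    ⟨hp.2.le, hyz.trans hz₁₂.le⟩ ⟨(hp.2.trans_le hyz).le, hz₁₂.le⟩ hy₂p hrise'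
  exact ⟨p, q, hKx₁.trans hp.1.le, hq.1, hpmax, hqmin, hqp⟩

theorem not_monotoneOn_Ici_of_bounds_at_extrema {h : ℝ → ℝ} (hw : Continuous w)
    (hosc : OscillatoryAtTop w)
    (hmax : ∀ p, IsLocalMax w p → w p ≤ h p) (hmin : ∀ q, IsLocalMin w q → h q ≤ w q) (K : ℝ) :
    ¬ MonotoneOn h (Ici K) := by
  intro hmono
  obtain ⟨p, q, hKp, hpq, hpmax, hqmin, hqp⟩ := hosc.exists_isLocalMax_isLocalMin_after hw K
  have hhpq : h p ≤ h q := hmono hKp (hKp.trans hpq.le) hpq.le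
  linarith [hmax p hpmax, hmin q hqmin]

theorem of_bounds_at_extrema {h : ℝ → ℝ} (hw : Continuous w) (hosc : OscillatoryAtTop w)
    (hmax : ∀ p, IsLocalMax w p → w p ≤ h p) (hmin : ∀ q, IsLocalMin w q → h q ≤ w q) :
    OscillatoryAtTop h := by
  rintro ⟨K, hK | hK⟩
  · exact not_monotoneOn_Ici_of_bounds_at_extrema hw hosc hmax hmin K hK
  · refine not_monotoneOn_Ici_of_bounds_at_extrema hw.neg hosc.neg
      (fun p hp => ?_) (fun q hq => ?_) K hK.neg
    · exact neg_le_neg (hmin p (by simpa using hp.neg))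
    · exact neg_le_neg (hmax q (by simpa using hq.neg))

end OscillatoryAtTop

theorem OscillatoryAtTop.of_competitive_wave_eq {w z : ℝ → ℝ} {k s A B : ℝ} (hk : 0 ≤ k)
    (hB : 0 < B) (hw : Continuous w) (hpos : ∀ ξ, 0 < w ξ)
    (heq : ∀ ξ, k * deriv (deriv w) ξ - s * deriv w ξ + w ξ * (A - w ξ - B * z ξ) = 0)
    (hosc : OscillatoryAtTop w) : OscillatoryAtTop z := by
  have hcrit : ∀ ξ, deriv w ξ = 0 → w ξ * (A - w ξ - B * z ξ) = -(k * deriv (deriv w) ξ) :=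
    fun ξ h0 => by linear_combination heq ξ + s * h0
  have hg : Antitone fun t => A - B * t :=
    fun _ _ hxy => sub_le_sub_left (mul_le_mul_of_nonneg_left hxy hB.le) A
  refine of_comp (Or.inr hg) (of_bounds_at_extrema hw hosc (fun p hp => ?_) (fun q hq => ?_))
  · have hreaction : 0 ≤ A - w p - B * z p := by
      refine nonneg_of_mul_nonneg_right ?_ (hpos p)
      rw [hcrit p hp.deriv_eq_zero, neg_nonneg]
      exact mul_nonpos_of_nonneg_of_nonpos hk (hp.deriv_deriv_nonpos hw.continuousAt)
    change w p ≤ A - B * z p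
    linarith
  · have hreaction : A - w q - B * z q ≤ 0 := by
      refine nonpos_of_mul_nonpos_right ?_ (hpos q)
      rw [hcrit q hq.deriv_eq_zero, neg_nonpos]
      exact mul_nonneg hk (hq.deriv_deriv_nonneg hw.continuousAt)
    change A - B * z q ≤ w q
    linarith

theorem oscillation_propagates_general
    (a b c d : ℝ) (hb : 0 < b) (hc : 0 < c) (hd : 0 < d) (s : ℝ)
    (u v : ℝ → ℝ) (hu : ContDiff ℝ 2 u) (hv : ContDiff ℝ 2 v)
    (hupos : ∀ ξ : ℝ, 0 < u ξ) (hvpos : ∀ ξ : ℝ, 0 < v ξ)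
    (hueq : ∀ ξ : ℝ, deriv (deriv u) ξ - s * deriv u ξ + u ξ * (1 - u ξ - c * v ξ) = 0)
    (hveq : ∀ ξ : ℝ, d * deriv (deriv v) ξ - s * deriv v ξ + v ξ * (a - b * u ξ - v ξ) = 0) :
    (OscillatoryAtTop u → OscillatoryAtTop v) ∧
    (OscillatoryAtTop v → OscillatoryAtTop u) :=
  ⟨.of_competitive_wave_eq (z := v) (s := s) (A := 1) zero_le_one hc hu.continuous hupos
      fun ξ => by linear_combination hueq ξ,
    .of_competitive_wave_eq (z := u) (s := s) (A := a) hd.le hb hv.continuous hvpos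
      fun ξ => by linear_combination hveq ξ⟩

/-- Cooperative oscillation at `+∞`: for positive solutions of the
traveling-wave system, if one component oscillates near `+∞` then so does the
other. -/
theorem oscillation_propagates
    (a b c d : ℝ) (ha : 0 < a) (hb : 0 < b) (hc : 0 < c) (hd : 0 < d) (s : ℝ)
    (u v : ℝ → ℝ) (hu : ContDiff ℝ 2 u) (hv : ContDiff ℝ 2 v)
    (hupos : ∀ ξ : ℝ, 0 < u ξ) (hvpos : ∀ ξ : ℝ, 0 < v ξ)
    (hueq : ∀ ξ : ℝ, deriv (deriv u) ξ - s * deriv u ξ + u ξ * (1 - u ξ - c * v ξ) = 0)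
    (hveq : ∀ ξ : ℝ, d * deriv (deriv v) ξ - s * deriv v ξ + v ξ * (a - b * u ξ - v ξ) = 0) :
    (OscillatoryAtTop u → OscillatoryAtTop v) ∧
    (OscillatoryAtTop v → OscillatoryAtTop u) :=
  oscillation_propagates_general a b c d hb hc hd s u v hu hv hupos hvpos hueq hveq
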